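/- Let γ, σ² : [0,1] → ℝ be continuous with σ²(u) > 0 for all u ∈ [0,1] (condition (UE)), let Γ(u) := ∫₀^u γ(v) dv, g := ∫₀¹ γ(v) dv, assume (E1): Γ(u) − g·u > 0 for all u ∈ (0,1), let Ψ(u) := ∫_{1/2}^u σ²(v)/(2(Γ(v) − g·v)) dv and p_c := 2(g − γ(1))/σ²(1), and suppose p_c > 0 and Z̄^{p_c} := ∫₀¹ exp(p_c·Ψ(u)) du = +∞. Then for every continuous function f : [0,1] → ℝ, lim_{p → p_c⁻} ⟨f, Π̄^p⟩ = f(1), where ⟨f, Π̄^p⟩ := (∫₀¹ f(u)·exp(p·Ψ(u)) du)/(∫₀¹ exp(p·Ψ(u)) du). -/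

import Mathlib

/-! Ψ is increasing with Ψ' = σ²/(2(Γ − g·u)), and Γ(u) − g·u ∼ (g − γ(1))(1 − u) as u → 1⁻,
so (1 − u)Ψ'(u) → 1/p_c. For 0 ≤ p < p_c this gives exp(pΨ(u)) ≤ C(1 − u)^(−α) with α < 1,
hence Z̄^p < ∞, while Fatou's lemma and Z̄^{p_c} = ∞ force Z̄^p → ∞ as p → p_c⁻. Since exp(pΨ)
stays bounded away from u = 1, the normalised weights exp(pΨ)/Z̄^p are peak functions at 1. -/

open MeasureTheory Set Filter Topology

/-- `Γ(u) = ∫₀^u γ(v) dv`. -/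
noncomputable def Gam (γ : ℝ → ℝ) (u : ℝ) : ℝ := ∫ v in (0:ℝ)..u, γ v

/-- market mean growth rate `g = ∫₀¹ γ(v) dv`. -/
noncomputable def mg (γ : ℝ → ℝ) : ℝ := ∫ v in (0:ℝ)..1, γ v

/-- `Ψ(u) = ∫_{1/2}^u σ²(v) / (2 (Γ(v) - g v)) dv`. -/
noncomputable def Psi (γ σ2 : ℝ → ℝ) (u : ℝ) : ℝ :=
  ∫ v in (1/2:ℝ)..u, σ2 v / (2 * (Gam γ v - mg γ * v))

/-- critical diversity index `p_c = 2 (g - γ(1)) / σ²(1)`. -/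
noncomputable def pcrit (γ σ2 : ℝ → ℝ) : ℝ := 2 * (mg γ - γ 1) / σ2 1

/-- critical index `q_c = 2 (γ(0) - g) / σ²(0)`. -/
noncomputable def qcrit (γ σ2 : ℝ → ℝ) : ℝ := 2 * (γ 0 - mg γ) / σ2 0

/-- `⟨f, Π̄^p⟩ = (∫₀¹ f(u) exp(p Ψ(u)) du) / (∫₀¹ exp(p Ψ(u)) du)`. -/
noncomputable def bracket (γ σ2 f : ℝ → ℝ) (p : ℝ) : ℝ :=
  (∫ u in Set.Ioo (0:ℝ) 1, f u * Real.exp (p * Psi γ σ2 u)) /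
    ∫ u in Set.Ioo (0:ℝ) 1, Real.exp (p * Psi γ σ2 u)

open Real

lemma add_mul_log_one_sub_le {F F' : ℝ → ℝ} {a α u : ℝ} (hF : ContinuousOn F (Ico a 1))
    (hF' : ∀ v ∈ Ioo a 1, HasDerivAt F (F' v) v) (hle : ∀ v ∈ Ioo a 1, F' v ≤ α / (1 - v))
    (hu : u ∈ Ico a 1) :
    F u + α * log (1 - u) ≤ F a + α * log (1 - a) := by
  have hlog : ContinuousOn (fun v => log (1 - v)) (Ico a 1) :=
    (continuousOn_const.sub continuousOn_id).log fun v hv => (sub_pos.2 hv.2).ne'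
  refine antitoneOn_of_hasDerivWithinAt_nonpos (f := fun v => F v + α * log (1 - v))
    (f' := fun v => F' v - α / (1 - v)) (convex_Ico a 1) (hF.add (continuousOn_const.mul hlog))
    (fun v hv => ?_) (fun v hv => ?_) (left_mem_Ico.2 (hu.1.trans_lt hu.2)) hu hu.1
    <;> rw [interior_Ico] at hv
  · exact ((hF' v hv).add ((((hasDerivAt_id' v).const_sub 1).log (sub_pos.2 hv.2).ne').const_mul
      α)).hasDerivWithinAt.congr_deriv (by ring)
  · exact sub_nonpos.2 (hle v hv)

lemma integrableOn_one_sub_rpow {α : ℝ} (hα : α < 1) :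
    IntegrableOn (fun u : ℝ => (1 - u) ^ (-α)) (Ioo 0 1) := by
  have h := ((intervalIntegral.intervalIntegrable_rpow' (a := 0) (b := 1)
    (by linarith : -1 < -α)).comp_sub_left 1).symm
  simp only [sub_zero, sub_self] at h
  rwa [intervalIntegrable_iff_integrableOn_Ioo_of_le zero_le_one] at h

theorem tendsto_integral_atTop_of_lintegral_eq_top {ι α : Type*} [MeasurableSpace α]
    {μ : Measure α} {l : Filter ι} [l.IsCountablyGenerated] [l.NeBot] {f : ι → α → ℝ}
    {F : α → ℝ} (hf_nonneg : ∀ i, 0 ≤ f i) (hf_meas : ∀ i, AEMeasurable (f i) μ)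
    (hf_int : ∀ᶠ i in l, Integrable (f i) μ)
    (hlim : ∀ᵐ x ∂μ, Tendsto (fun i => f i x) l (𝓝 (F x)))
    (htop : ∫⁻ x, ENNReal.ofReal (F x) ∂μ = ⊤) :
    Tendsto (fun i => ∫ x, f i x ∂μ) l atTop := by
  have hlint : Tendsto (fun i => ∫⁻ x, ENNReal.ofReal (f i x) ∂μ) l (𝓝 ⊤) := by
    refine tendsto_of_le_liminf_of_limsup_le ?_ le_top
    calc ⊤ = ∫⁻ x, liminf (fun i => ENNReal.ofReal (f i x)) l ∂μ := by
          rw [← htop]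
          refine lintegral_congr_ae (hlim.mono fun x hx => ?_)
          exact (((ENNReal.continuous_ofReal.tendsto _).comp hx).liminf_eq).symm
      _ ≤ _ := lintegral_liminf_le' fun i => (hf_meas i).ennreal_ofReal
  refine tendsto_atTop.2 fun C => ?_
  filter_upwards [hlint.eventually (lt_mem_nhds (ENNReal.ofReal_lt_top (r := C))), hf_int]
    with i hCi hi
  rw [integral_eq_lintegral_of_nonneg_ae (ae_of_all _ (hf_nonneg i)) hi.aestronglyMeasurable]
  exact (ENNReal.ofReal_le_iff_le_toReal hi.lintegral_lt_top.ne).1 hCi.le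

theorem tendsto_setIntegral_mul_div_setIntegral_of_tendsto_atTop {ι α : Type*}
    [MeasurableSpace α] [TopologicalSpace α] [BorelSpace α] {μ : Measure α} {l : Filter ι}
    {s : Set α} {x₀ : α} {w : ι → α → ℝ} {g : α → ℝ} {a : ℝ}
    (hs : MeasurableSet s) (hμs : μ s ≠ ⊤) (hw_nonneg : ∀ᶠ i in l, ∀ x ∈ s, 0 ≤ w i x)
    (hw_int : ∀ᶠ i in l, IntegrableOn (w i) s μ)
    (hw_mass : Tendsto (fun i => ∫ x in s, w i x ∂μ) l atTop)
    (hw_bdd : ∀ U ∈ 𝓝 x₀, ∃ C, ∀ᶠ i in l, ∀ x ∈ s \ U, w i x ≤ C)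
    (hg : IntegrableOn g s μ) (hgx₀ : Tendsto g (𝓝[s] x₀) (𝓝 a)) :
    Tendsto (fun i => (∫ x in s, g x * w i x ∂μ) / ∫ x in s, w i x ∂μ) l (𝓝 a) := by
  set Z := fun i => ∫ x in s, w i x ∂μ
  have hZ : ∀ᶠ i in l, 0 < Z i := hw_mass.eventually_gt_atTop 0
  have hpeak := tendsto_setIntegral_peak_smul_of_integrableOn_of_tendsto (l := l)
    (φ := fun i x => w i x / Z i) hs hs subset_rfl self_mem_nhdsWithin hμs
    ?nonneg ?unif ?mass ?meas hg hgx₀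
  case nonneg =>
    filter_upwards [hw_nonneg, hZ] with i hi hZi x hx using div_nonneg (hi x hx) hZi.le
  case unif =>
    intro U hU hx₀U
    obtain ⟨C, hC⟩ := hw_bdd U (hU.mem_nhds hx₀U)
    refine Metric.tendstoUniformlyOn_iff.2 fun ε hε => ?_
    filter_upwards [hC, hw_nonneg, hZ,
      (tendsto_const_nhds.div_atTop hw_mass).eventually (gt_mem_nhds hε)]
      with i hCi hi hZi hεi x hx
    rw [Pi.zero_apply, dist_zero_left, norm_of_nonneg (div_nonneg (hi x hx.1) hZi.le)]
    exact (div_le_div_of_nonneg_right (hCi x hx) hZi.le).trans_lt hεi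
  case mass =>
    refine tendsto_const_nhds.congr' ?_
    filter_upwards [hZ] with i hZi
    rw [integral_div, div_self hZi.ne']
  case meas =>
    filter_upwards [hw_int] with i hi using (hi.div_const (Z i)).aestronglyMeasurable
  refine hpeak.congr fun i => ?_
  rw [← integral_div]
  congr with x
  rw [smul_eq_mul]
  ring

noncomputable def psiDensity (γ σ2 : ℝ → ℝ) (v : ℝ) : ℝ := σ2 v / (2 * (Gam γ v - mg γ * v))

section Psi

variable {γ σ2 : ℝ → ℝ}

lemma continuousOn_Gam (hγ : ContinuousOn γ (Icc 0 1)) : ContinuousOn (Gam γ) (Icc 0 1) := by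
  have := intervalIntegral.continuousOn_primitive_interval (μ := volume) (a := 0) (b := 1)
    (f := γ) (by rw [uIcc_of_le zero_le_one]; exact hγ.integrableOn_Icc)
  rwa [uIcc_of_le zero_le_one] at this

lemma psiDensity_pos (hUE : ∀ u ∈ Icc (0:ℝ) 1, 0 < σ2 u)
    (hE1 : ∀ u ∈ Ioo (0:ℝ) 1, 0 < Gam γ u - mg γ * u) {u : ℝ} (hu : u ∈ Ioo 0 1) :
    0 < psiDensity γ σ2 u :=
  div_pos (hUE u (Ioo_subset_Icc_self hu)) (mul_pos two_pos (hE1 u hu))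

lemma continuousOn_psiDensity (hγ : ContinuousOn γ (Icc 0 1)) (hσ : ContinuousOn σ2 (Icc 0 1))
    (hE1 : ∀ u ∈ Ioo (0:ℝ) 1, 0 < Gam γ u - mg γ * u) :
    ContinuousOn (psiDensity γ σ2) (Ioo 0 1) :=
  (hσ.mono Ioo_subset_Icc_self).div
    (continuousOn_const.mul (((continuousOn_Gam hγ).mono Ioo_subset_Icc_self).sub
      (continuousOn_const.mul continuousOn_id)))
    fun v hv => (mul_pos two_pos (hE1 v hv)).ne'

lemma hasDerivAt_Psi (hγ : ContinuousOn γ (Icc 0 1)) (hσ : ContinuousOn σ2 (Icc 0 1))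
    (hE1 : ∀ u ∈ Ioo (0:ℝ) 1, 0 < Gam γ u - mg γ * u) {u : ℝ} (hu : u ∈ Ioo 0 1) :
    HasDerivAt (Psi γ σ2) (psiDensity γ σ2 u) u := by
  have hcont := continuousOn_psiDensity hγ hσ hE1
  exact intervalIntegral.integral_hasDerivAt_right
    (hcont.mono (ordConnected_Ioo.uIcc_subset ⟨by norm_num, by norm_num⟩ hu)).intervalIntegrable
    (hcont.stronglyMeasurableAtFilter isOpen_Ioo u hu)
    (hcont.continuousAt (isOpen_Ioo.mem_nhds hu))

lemma continuousOn_Psi (hγ : ContinuousOn γ (Icc 0 1)) (hσ : ContinuousOn σ2 (Icc 0 1))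
    (hE1 : ∀ u ∈ Ioo (0:ℝ) 1, 0 < Gam γ u - mg γ * u) :
    ContinuousOn (Psi γ σ2) (Ioo 0 1) :=
  fun _ hu => (hasDerivAt_Psi hγ hσ hE1 hu).continuousAt.continuousWithinAt

lemma monotoneOn_Psi (hγ : ContinuousOn γ (Icc 0 1)) (hσ : ContinuousOn σ2 (Icc 0 1))
    (hUE : ∀ u ∈ Icc (0:ℝ) 1, 0 < σ2 u) (hE1 : ∀ u ∈ Ioo (0:ℝ) 1, 0 < Gam γ u - mg γ * u) :
    MonotoneOn (Psi γ σ2) (Ioo 0 1) := by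
  refine monotoneOn_of_hasDerivWithinAt_nonneg (f' := psiDensity γ σ2) (convex_Ioo 0 1)
    (continuousOn_Psi hγ hσ hE1) (fun u hu => ?_) (fun u hu => ?_) <;> rw [interior_Ioo] at hu
  · exact (hasDerivAt_Psi hγ hσ hE1 hu).hasDerivWithinAt
  · exact (psiDensity_pos hUE hE1 hu).le

lemma tendsto_Gam_sub_mul_div_one_sub (hγ : ContinuousOn γ (Icc 0 1)) :
    Tendsto (fun v => (Gam γ v - mg γ * v) / (1 - v)) (𝓝[<] 1) (𝓝 (mg γ - γ 1)) := by
  have hGam : HasDerivWithinAt (Gam γ) (γ 1) (Iic 1) 1 :=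
    intervalIntegral.integral_hasDerivWithinAt_right
      (hγ.intervalIntegrable_of_Icc (μ := volume) zero_le_one)
      ((hγ.stronglyMeasurableAtFilter_nhdsWithin measurableSet_Icc 1).filter_mono
        (nhdsWithin_le_of_mem (Icc_mem_nhdsLE zero_lt_one)))
      ((hγ 1 ⟨zero_le_one, le_rfl⟩).mono_of_mem_nhdsWithin (Icc_mem_nhdsLE zero_lt_one))
  have hslope := (hasDerivWithinAt_iff_tendsto_slope' (by simp : (1:ℝ) ∉ Iio 1)).1
    ((hGam.mono Iio_subset_Iic_self).sub ((hasDerivWithinAt_id _ _).const_mul (mg γ)))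
  have hGam1 : Gam γ 1 = mg γ := rfl
  rw [show mg γ - γ 1 = -(γ 1 - mg γ * 1) by ring]
  refine hslope.neg.congr fun v => ?_
  simp only [slope_def_field, Pi.sub_apply, id, hGam1]
  rw [← div_neg, neg_sub]
  ring

lemma tendsto_one_sub_mul_psiDensity (hγ : ContinuousOn γ (Icc 0 1))
    (hσ : ContinuousOn σ2 (Icc 0 1)) (hpc : pcrit γ σ2 ≠ 0) :
    Tendsto (fun v => (1 - v) * psiDensity γ σ2 v) (𝓝[<] 1) (𝓝 (pcrit γ σ2)⁻¹) := by
  have hmg : 2 * (mg γ - γ 1) ≠ 0 := fun h => hpc (by simp [pcrit, h])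
  have hσ1 : Tendsto σ2 (𝓝[<] 1) (𝓝 (σ2 1)) :=
    (hσ 1 ⟨zero_le_one, le_rfl⟩).mono_of_mem_nhdsWithin (Icc_mem_nhdsLT zero_lt_one)
  rw [pcrit, inv_div]
  refine (hσ1.div ((tendsto_Gam_sub_mul_div_one_sub hγ).const_mul 2) hmg).congr fun v => ?_
  rw [Pi.div_apply, psiDensity, ← mul_div_assoc, div_div_eq_mul_div]
  ring

lemma exists_exp_mul_Psi_le_rpow (hγ : ContinuousOn γ (Icc 0 1))
    (hσ : ContinuousOn σ2 (Icc 0 1)) (hUE : ∀ u ∈ Icc (0:ℝ) 1, 0 < σ2 u)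
    (hE1 : ∀ u ∈ Ioo (0:ℝ) 1, 0 < Gam γ u - mg γ * u) (hpc : 0 < pcrit γ σ2) {p : ℝ}
    (hp0 : 0 ≤ p) (hp : p < pcrit γ σ2) :
    ∃ C α : ℝ, α < 1 ∧ ∀ u ∈ Ioo (0:ℝ) 1, exp (p * Psi γ σ2 u) ≤ C * (1 - u) ^ (-α) := by
  have hp1 : p / pcrit γ σ2 < 1 := (div_lt_one hpc).2 hp
  obtain ⟨α, hpα, hα1⟩ : ∃ α, p / pcrit γ σ2 < α ∧ α < 1 :=
    ⟨(1 + p / pcrit γ σ2) / 2, by linarith, by linarith⟩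
  have hα0 : 0 ≤ α := (div_nonneg hp0 hpc.le).trans hpα.le
  have hev : ∀ᶠ v in 𝓝[<] (1:ℝ), p * ((1 - v) * psiDensity γ σ2 v) < α :=
    ((tendsto_one_sub_mul_psiDensity hγ hσ hpc.ne').const_mul p).eventually
      (gt_mem_nhds (by rw [← div_eq_mul_inv]; linarith))
  obtain ⟨a, ha1, ha⟩ := mem_nhdsLT_iff_exists_Ioo_subset.1 hev
  set b := max a (1 / 2)
  have hb : b ∈ Ioo (0:ℝ) 1 := ⟨lt_max_of_lt_right one_half_pos, max_lt ha1 one_half_lt_one⟩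
  have hsub : Ico b 1 ⊆ Ioo 0 1 := fun u hu => ⟨hb.1.trans_le hu.1, hu.2⟩
  have hcmp : ∀ u ∈ Ico b 1, p * Psi γ σ2 u + α * log (1 - u) ≤
      p * Psi γ σ2 b + α * log (1 - b) := fun u hu =>
    add_mul_log_one_sub_le (F' := fun v => p * psiDensity γ σ2 v)
      (((continuousOn_Psi hγ hσ hE1).mono hsub).const_smul p)
      (fun v hv => (hasDerivAt_Psi hγ hσ hE1 (hsub (Ioo_subset_Ico_self hv))).const_mul p)
      (fun v hv => by
        rw [le_div_iff₀ (sub_pos.2 hv.2)]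
        have := ha ⟨(le_max_left _ _).trans_lt hv.1, hv.2⟩
        simp only [mem_ofPred_eq] at this
        linarith)
      hu
  refine ⟨exp (p * Psi γ σ2 b), α, hα1, fun u hu => ?_⟩
  have h1u : 0 < 1 - u := sub_pos.2 hu.2
  rcases le_total u b with hub | hbu
  · calc exp (p * Psi γ σ2 u) ≤ exp (p * Psi γ σ2 b) :=
          exp_le_exp.2 (mul_le_mul_of_nonneg_left (monotoneOn_Psi hγ hσ hUE hE1 hu hb hub) hp0)
      _ ≤ exp (p * Psi γ σ2 b) * (1 - u) ^ (-α) :=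
          le_mul_of_one_le_right (exp_pos _).le
            (one_le_rpow_of_pos_of_le_one_of_nonpos h1u (by linarith [hu.1]) (by linarith))
  · have hlogb : log (1 - b) ≤ 0 := log_nonpos (by linarith [hb.2]) (by linarith [hb.1])
    calc exp (p * Psi γ σ2 u) = exp (p * Psi γ σ2 u + α * log (1 - u)) * (1 - u) ^ (-α) := by
          rw [rpow_def_of_pos h1u, ← exp_add]; ring_nf
      _ ≤ exp (p * Psi γ σ2 b) * (1 - u) ^ (-α) := by
          refine mul_le_mul_of_nonneg_right (exp_le_exp.2 ?_) (rpow_nonneg h1u.le _)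
          nlinarith [hcmp u ⟨hbu, hu.2⟩]

lemma aestronglyMeasurable_exp_mul_Psi (hγ : ContinuousOn γ (Icc 0 1))
    (hσ : ContinuousOn σ2 (Icc 0 1)) (hE1 : ∀ u ∈ Ioo (0:ℝ) 1, 0 < Gam γ u - mg γ * u) (p : ℝ) :
    AEStronglyMeasurable (fun u => exp (p * Psi γ σ2 u)) (volume.restrict (Ioo 0 1)) :=
  ((continuousOn_Psi hγ hσ hE1).const_smul p).rexp.aestronglyMeasurable measurableSet_Ioo

lemma integrableOn_exp_mul_Psi (hγ : ContinuousOn γ (Icc 0 1))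
    (hσ : ContinuousOn σ2 (Icc 0 1)) (hUE : ∀ u ∈ Icc (0:ℝ) 1, 0 < σ2 u)
    (hE1 : ∀ u ∈ Ioo (0:ℝ) 1, 0 < Gam γ u - mg γ * u) (hpc : 0 < pcrit γ σ2) {p : ℝ}
    (hp0 : 0 ≤ p) (hp : p < pcrit γ σ2) :
    IntegrableOn (fun u => exp (p * Psi γ σ2 u)) (Ioo 0 1) := by
  obtain ⟨C, α, hα, hle⟩ := exists_exp_mul_Psi_le_rpow hγ hσ hUE hE1 hpc hp0 hp
  refine ((integrableOn_one_sub_rpow hα).const_mul C).mono'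
    (aestronglyMeasurable_exp_mul_Psi hγ hσ hE1 p) ((ae_restrict_iff' measurableSet_Ioo).2 ?_)
  filter_upwards with u hu
  rw [norm_of_nonneg (exp_pos _).le]
  exact hle u hu

lemma tendsto_integral_exp_mul_Psi_atTop (hγ : ContinuousOn γ (Icc 0 1))
    (hσ : ContinuousOn σ2 (Icc 0 1)) (hUE : ∀ u ∈ Icc (0:ℝ) 1, 0 < σ2 u)
    (hE1 : ∀ u ∈ Ioo (0:ℝ) 1, 0 < Gam γ u - mg γ * u) (hpc : 0 < pcrit γ σ2)
    (hZ : ∫⁻ u in Ioo (0:ℝ) 1, ENNReal.ofReal (exp (pcrit γ σ2 * Psi γ σ2 u)) = ⊤) :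
    Tendsto (fun p => ∫ u in Ioo (0:ℝ) 1, exp (p * Psi γ σ2 u)) (𝓝[<] pcrit γ σ2) atTop :=
  tendsto_integral_atTop_of_lintegral_eq_top (fun _ _ => (exp_pos _).le)
    (fun p => (aestronglyMeasurable_exp_mul_Psi hγ hσ hE1 p).aemeasurable)
    (mem_of_superset (Ioo_mem_nhdsLT hpc) fun _ hp =>
      integrableOn_exp_mul_Psi hγ hσ hUE hE1 hpc hp.1.le hp.2)
    (ae_of_all _ fun _ => (((continuous_id.mul continuous_const).rexp).tendsto _).mono_left
      nhdsWithin_le_nhds)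
    hZ

lemma exp_mul_Psi_le_of_mem_nhds (hγ : ContinuousOn γ (Icc 0 1))
    (hσ : ContinuousOn σ2 (Icc 0 1)) (hUE : ∀ u ∈ Icc (0:ℝ) 1, 0 < σ2 u)
    (hE1 : ∀ u ∈ Ioo (0:ℝ) 1, 0 < Gam γ u - mg γ * u) (q : ℝ) {U : Set ℝ} (hU : U ∈ 𝓝 1) :
    ∃ C, ∀ p ∈ Icc 0 q, ∀ u ∈ Ioo 0 1 \ U, exp (p * Psi γ σ2 u) ≤ C := by
  obtain ⟨l, hl, hlU⟩ := mem_nhdsLT_iff_exists_Ioo_subset.1 (mem_nhdsWithin_of_mem_nhds hU)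
  set b := max l (1 / 2)
  have hb : b ∈ Ioo (0:ℝ) 1 := ⟨lt_max_of_lt_right one_half_pos, max_lt hl one_half_lt_one⟩
  refine ⟨exp (q * |Psi γ σ2 b|), fun p hp u hu => exp_le_exp.2 ?_⟩
  have hub : u ≤ b := by
    by_contra! hbu
    exact hu.2 (hlU ⟨(le_max_left _ _).trans_lt hbu, hu.1.2⟩)
  calc p * Psi γ σ2 u ≤ p * Psi γ σ2 b :=
        mul_le_mul_of_nonneg_left (monotoneOn_Psi hγ hσ hUE hE1 hu.1 hb hub) hp.1
    _ ≤ p * |Psi γ σ2 b| := mul_le_mul_of_nonneg_left (le_abs_self _) hp.1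
    _ ≤ q * |Psi γ σ2 b| := mul_le_mul_of_nonneg_right hp.2 (abs_nonneg _)

end Psi

/-- under (UE), (E1), p_c > 0 and Z̄^{p_c} = +∞, for every continuous
f : [0,1] → ℝ one has ⟨f, Π̄^p⟩ → f(1) as p → p_c⁻. -/
theorem stmt10 (γ σ2 : ℝ → ℝ) (hγc : ContinuousOn γ (Set.Icc 0 1))
    (hσc : ContinuousOn σ2 (Set.Icc 0 1)) (hUE : ∀ u ∈ Set.Icc (0:ℝ) 1, 0 < σ2 u)
    (hE1 : ∀ u ∈ Set.Ioo (0:ℝ) 1, 0 < Gam γ u - mg γ * u)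
    (hpc : 0 < pcrit γ σ2)
    (hZ : (∫⁻ u in Set.Ioo (0:ℝ) 1,
        ENNReal.ofReal (Real.exp (pcrit γ σ2 * Psi γ σ2 u))) = ⊤)
    (f : ℝ → ℝ) (hf : ContinuousOn f (Set.Icc 0 1)) :
    Filter.Tendsto (bracket γ σ2 f)
      (nhdsWithin (pcrit γ σ2) (Set.Iio (pcrit γ σ2))) (nhds (f 1)) := by
  have hp_mem : ∀ᶠ p in 𝓝[<] pcrit γ σ2, p ∈ Ioo 0 (pcrit γ σ2) := Ioo_mem_nhdsLT hpc
  refine tendsto_setIntegral_mul_div_setIntegral_of_tendsto_atTop measurableSet_Ioo (by simp)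
    (Eventually.of_forall fun _ _ _ => (exp_pos _).le)
    (hp_mem.mono fun p hp => integrableOn_exp_mul_Psi hγc hσc hUE hE1 hpc hp.1.le hp.2)
    (tendsto_integral_exp_mul_Psi_atTop hγc hσc hUE hE1 hpc hZ) (fun U hU => ?_)
    (hf.integrableOn_Icc.mono_set Ioo_subset_Icc_self)
    ((hf 1 ⟨zero_le_one, le_rfl⟩).mono Ioo_subset_Icc_self)
  obtain ⟨C, hC⟩ := exp_mul_Psi_le_of_mem_nhds hγc hσc hUE hE1 (pcrit γ σ2) hU
  exact ⟨C, hp_mem.mono fun p hp => hC p ⟨hp.1.le, hp.2.le⟩⟩
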